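/- Let ψ, φ ∈ S(ℝ^d), d ≥ 2, and fix j ≥ 0 and ℓ ∈ ℤ^{d-1} with |ℓ_i| ≤ 2^j. Then for every N > d there exists C_N > 0 (independent of j and ℓ) such that for all x ∈ ℝ^d, ∫_{ℝ^d} |ψ(B^{[ℓ]} A^j (x-y))| · |φ(2^{2j} y)| dy ≤ C_N · 2^{-(d+1)j} · (1 + 2^j |x|)^{-N}. -/

import Mathlib

/-!
The matrix `M = B^[ℓ] A^j` expands every vector by at least `2^j / d²`: its last `d - 1` rows
scale by `2^j`, and the shear in the first row costs at most `|ℓ_i| ≤ 2^j`. Since `y ↦ 2^{2j} y`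
expands by `2^{2j} ≥ 2^j` as well, `1 + 2^j‖x‖ ≤ d² (1 + ‖M(x-y)‖)(1 + ‖2^{2j} y‖)`, so decay of
order `N` of both Schwartz factors yields `(1 + 2^j‖x‖)^{-N}`. The leftover decay
`(1 + ‖M(x-y)‖)^{-(d+1)}` of `ψ` is integrable, with integral `|det M|⁻¹ = 2^{-(d+1)j}` times a
constant.
-/

open MeasureTheory

noncomputable section

def shearletA (d j : ℕ) [NeZero d] : Matrix (Fin d) (Fin d) ℝ :=
  Matrix.diagonal (fun i => if i = 0 then (4 : ℝ) ^ j else (2 : ℝ) ^ j)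

def shearletB (d : ℕ) [NeZero d] (ℓ : Fin d → ℤ) : Matrix (Fin d) (Fin d) ℝ :=
  Matrix.of fun i k => if i = k then 1 else if i = 0 then (ℓ k : ℝ) else 0

def matVec {d : ℕ} (M : Matrix (Fin d) (Fin d) ℝ) (x : EuclideanSpace ℝ (Fin d)) :
    EuclideanSpace ℝ (Fin d) :=
  (WithLp.equiv 2 (Fin d → ℝ)).symm (M.mulVec (WithLp.equiv 2 (Fin d → ℝ) x))

open scoped SchwartzMap

namespace SchwartzMap

variable {E F : Type*} [NormedAddCommGroup E] [NormedSpace ℝ E]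
  [NormedAddCommGroup F] [NormedSpace ℝ F]

theorem exists_norm_le_mul_one_add_norm_rpow_neg (f : 𝓢(E, F)) (r : ℝ) :
    ∃ C, 0 < C ∧ ∀ x, ‖f x‖ ≤ C * (1 + ‖x‖) ^ (-r) := by
  set k := ⌈r⌉₊
  set S := (Finset.Iic (k, 0)).sup (fun m => SchwartzMap.seminorm ℝ m.1 m.2) f
  have hS : 0 ≤ S := apply_nonneg _ f
  refine ⟨2 ^ k * S + 1, by positivity, fun x => ?_⟩
  have hx : 1 ≤ 1 + ‖x‖ := le_add_of_nonneg_right (norm_nonneg x)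
  have hdecay : (1 + ‖x‖) ^ k * ‖f x‖ ≤ 2 ^ k * S := by
    simpa using one_add_le_sup_seminorm_apply (𝕜 := ℝ) (m := (k, 0)) le_rfl le_rfl f x
  calc ‖f x‖ ≤ (2 ^ k * S + 1) / (1 + ‖x‖) ^ k := by
        rw [le_div_iff₀ (by positivity)]; linarith
    _ = (2 ^ k * S + 1) * (1 + ‖x‖) ^ (-(k : ℝ)) := by
        rw [Real.rpow_neg (by positivity), Real.rpow_natCast, div_eq_mul_inv]
    _ ≤ (2 ^ k * S + 1) * (1 + ‖x‖) ^ (-r) := by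
        gcongr
        exact Nat.le_ceil r

end SchwartzMap

section LinearChangeOfVariables

variable {E F : Type*} [NormedAddCommGroup E] [NormedSpace ℝ E] [MeasurableSpace E]
  [BorelSpace E] [FiniteDimensional ℝ E] (μ : Measure E) [μ.IsAddHaarMeasure]
  [NormedAddCommGroup F] {f : E →ₗ[ℝ] E}

theorem integral_comp_linearMap [NormedSpace ℝ F] (hf : LinearMap.det f ≠ 0) (g : E → F) :
    ∫ x, g (f x) ∂μ = |(LinearMap.det f)⁻¹| • ∫ x, g x ∂μ := by
  let e := (f.equivOfDetNeZero hf).toContinuousLinearEquiv.toHomeomorph.toMeasurableEquiv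
  have hmap : Measure.map e μ = ENNReal.ofReal |(LinearMap.det f)⁻¹| • μ :=
    Measure.map_linearMap_addHaar_eq_smul_addHaar μ hf
  change ∫ x, g (e x) ∂μ = _
  rw [← integral_map_equiv e g, hmap, integral_smul_measure,
    ENNReal.toReal_ofReal (abs_nonneg _)]

theorem MeasureTheory.Integrable.comp_linearMap (hf : LinearMap.det f ≠ 0) {g : E → F}
    (hg : Integrable g μ) : Integrable (fun x => g (f x)) μ := by
  let e := (f.equivOfDetNeZero hf).toContinuousLinearEquiv.toHomeomorph.toMeasurableEquiv
  have hmap : Measure.map e μ = ENNReal.ofReal |(LinearMap.det f)⁻¹| • μ :=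
    Measure.map_linearMap_addHaar_eq_smul_addHaar μ hf
  have : Integrable g (Measure.map e μ) := by
    rw [hmap]; exact hg.smul_measure ENNReal.ofReal_ne_top
  exact (integrable_map_equiv e g).1 this

end LinearChangeOfVariables

theorem EuclideanSpace.norm_le_sum_abs {ι : Type*} [Fintype ι] (z : EuclideanSpace ℝ ι) :
    ‖z‖ ≤ ∑ i, |z i| := by
  rw [EuclideanSpace.norm_eq, Real.sqrt_le_left (Finset.sum_nonneg fun i _ => abs_nonneg _)]
  simpa using Finset.sum_sq_le_sq_sum_of_nonneg (s := Finset.univ) fun i _ => abs_nonneg (z i)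

theorem matVec_apply {d : ℕ} (M : Matrix (Fin d) (Fin d) ℝ) (z : EuclideanSpace ℝ (Fin d))
    (k : Fin d) : matVec M z k = ∑ m, M k m * z m :=
  rfl

theorem matVec_eq_toEuclideanLin {d : ℕ} (M : Matrix (Fin d) (Fin d) ℝ)
    (z : EuclideanSpace ℝ (Fin d)) : matVec M z = Matrix.toEuclideanLin M z :=
  rfl

section Shearlet

variable {d : ℕ} [NeZero d]

theorem det_shearletB (ℓ : Fin d → ℤ) : (shearletB d ℓ).det = 1 := by
  have h : (shearletB d ℓ).BlockTriangular id := by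
    intro i k hki
    have hik : i ≠ k := (ne_of_lt hki).symm
    have hi : i ≠ 0 := by rintro rfl; exact (Fin.zero_le k).not_gt hki
    simp [shearletB, hik, hi]
  rw [Matrix.det_of_isUpperTriangular h]
  simp [shearletB]

theorem det_shearletB_mul_shearletA (j : ℕ) (ℓ : Fin d → ℤ) :
    (shearletB d ℓ * shearletA d j).det = 2 ^ ((d + 1) * j) := by
  obtain ⟨e, rfl⟩ : ∃ e, d = e + 1 := Nat.exists_eq_succ_of_ne_zero (NeZero.ne d)
  rw [Matrix.det_mul, det_shearletB, one_mul, shearletA, Matrix.det_diagonal, Fin.prod_univ_succ]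
  simp only [if_pos, Fin.succ_ne_zero, if_false, Finset.prod_const, Finset.card_univ,
    Fintype.card_fin]
  rw [show (4 : ℝ) = 2 ^ 2 by norm_num, ← pow_mul, ← pow_mul, ← pow_add]
  ring_nf

theorem shearletB_mul_shearletA_apply (j : ℕ) (ℓ : Fin d → ℤ) (i k : Fin d) :
    (shearletB d ℓ * shearletA d j) i k =
      (if i = k then 1 else if i = 0 then (ℓ k : ℝ) else 0) *
        (if k = 0 then (4 : ℝ) ^ j else 2 ^ j) := by
  rw [shearletA, Matrix.mul_diagonal]
  rfl

theorem matVec_shearlet_apply_of_ne_zero (j : ℕ) (ℓ : Fin d → ℤ) (z : EuclideanSpace ℝ (Fin d))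
    {k : Fin d} (hk : k ≠ 0) :
    matVec (shearletB d ℓ * shearletA d j) z k = 2 ^ j * z k := by
  rw [matVec_apply, Finset.sum_eq_single k]
  · simp [shearletB_mul_shearletA_apply, hk]
  · intro m _ hm
    simp [shearletB_mul_shearletA_apply, Ne.symm hm, hk]
  · simp

theorem matVec_shearlet_apply_zero (j : ℕ) (ℓ : Fin d → ℤ) (z : EuclideanSpace ℝ (Fin d)) :
    matVec (shearletB d ℓ * shearletA d j) z 0 = 4 ^ j * z 0 +
      ∑ m ∈ Finset.univ.erase 0, (ℓ m : ℝ) * matVec (shearletB d ℓ * shearletA d j) z m := by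
  rw [matVec_apply, ← Finset.add_sum_erase _ _ (Finset.mem_univ 0)]
  congr 1
  · simp [shearletB_mul_shearletA_apply]
  · refine Finset.sum_congr rfl fun m hm => ?_
    have hm0 : m ≠ 0 := Finset.ne_of_mem_erase hm
    rw [matVec_shearlet_apply_of_ne_zero j ℓ z hm0]
    simp [shearletB_mul_shearletA_apply, Ne.symm hm0, hm0]
    ring

theorem two_pow_mul_abs_le_norm_matVec_shearlet {j : ℕ} {ℓ : Fin d → ℤ}
    (hℓ : ∀ t : Fin d, t ≠ 0 → |ℓ t| ≤ 2 ^ j)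
    (z : EuclideanSpace ℝ (Fin d)) (i : Fin d) :
    2 ^ j * |z i| ≤ d * ‖matVec (shearletB d ℓ * shearletA d j) z‖ := by
  set u := matVec (shearletB d ℓ * shearletA d j) z
  have hd : (1 : ℝ) ≤ d := by exact_mod_cast Nat.one_le_iff_ne_zero.mpr (NeZero.ne d)
  have hu : ∀ m, |u m| ≤ ‖u‖ := fun m => by simpa using PiLp.norm_apply_le u m
  by_cases hi : i = 0
  · subst hi
    have hterm : ∀ m ∈ Finset.univ.erase (0 : Fin d), |(ℓ m : ℝ) * u m| ≤ 2 ^ j * ‖u‖ := by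
      intro m hm
      rw [abs_mul]
      have hℓm : |(ℓ m : ℝ)| ≤ 2 ^ j := by exact_mod_cast hℓ m (Finset.ne_of_mem_erase hm)
      exact mul_le_mul hℓm (hu m) (abs_nonneg _) (by positivity)
    have hrow0 : (2 : ℝ) ^ j * (2 ^ j * |z 0|) ≤ 2 ^ j * (d * ‖u‖) :=
      calc (2 : ℝ) ^ j * (2 ^ j * |z 0|)
            = |u 0 - ∑ m ∈ Finset.univ.erase (0 : Fin d), (ℓ m : ℝ) * u m| := by
            rw [matVec_shearlet_apply_zero, add_sub_cancel_right, abs_mul,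
              abs_of_pos (by positivity : (0 : ℝ) < 4 ^ j), ← mul_assoc, ← mul_pow]
            norm_num
        _ ≤ |u 0| + ∑ m ∈ Finset.univ.erase (0 : Fin d), |(ℓ m : ℝ) * u m| :=
            (abs_sub _ _).trans (add_le_add le_rfl (Finset.abs_sum_le_sum_abs _ _))
        _ ≤ 2 ^ j * ‖u‖ + ∑ m ∈ Finset.univ.erase (0 : Fin d), 2 ^ j * ‖u‖ := by
            gcongr with m hm
            · exact (hu 0).trans (le_mul_of_one_le_left (norm_nonneg u) (one_le_pow₀ one_le_two))
            · exact hterm m hm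
        _ = 2 ^ j * (d * ‖u‖) := by
            rw [Finset.add_sum_erase _ (fun _ => (2 : ℝ) ^ j * ‖u‖) (Finset.mem_univ 0)]
            simp only [Finset.sum_const, Finset.card_univ, Fintype.card_fin, nsmul_eq_mul]
            ring
    exact le_of_mul_le_mul_left hrow0 (by positivity)
  · calc 2 ^ j * |z i| = |u i| := by
          rw [matVec_shearlet_apply_of_ne_zero j ℓ z hi, abs_mul,
            abs_of_pos (by positivity : (0 : ℝ) < 2 ^ j)]
      _ ≤ d * ‖u‖ := (hu i).trans (le_mul_of_one_le_left (norm_nonneg u) hd)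

theorem two_pow_mul_norm_le_norm_matVec_shearlet {j : ℕ} {ℓ : Fin d → ℤ}
    (hℓ : ∀ t : Fin d, t ≠ 0 → |ℓ t| ≤ 2 ^ j)
    (z : EuclideanSpace ℝ (Fin d)) :
    2 ^ j * ‖z‖ ≤ d ^ 2 * ‖matVec (shearletB d ℓ * shearletA d j) z‖ :=
  calc 2 ^ j * ‖z‖ ≤ ∑ i, 2 ^ j * |z i| := by
        rw [← Finset.mul_sum]
        exact mul_le_mul_of_nonneg_left (EuclideanSpace.norm_le_sum_abs z) (by positivity)
    _ ≤ ∑ _i : Fin d, d * ‖matVec (shearletB d ℓ * shearletA d j) z‖ :=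
        Finset.sum_le_sum fun i _ => two_pow_mul_abs_le_norm_matVec_shearlet hℓ z i
    _ = d ^ 2 * ‖matVec (shearletB d ℓ * shearletA d j) z‖ := by
        simp only [Finset.sum_const, Finset.card_univ, Fintype.card_fin, nsmul_eq_mul]
        ring

end Shearlet

theorem one_add_mul_norm_le_mul {E : Type*} [SeminormedAddCommGroup E] {a K U V : ℝ} {x y : E}
    (ha : 0 ≤ a) (hK : 1 ≤ K) (hU : 0 ≤ U) (hV : 0 ≤ V)
    (hxy : a * ‖x - y‖ ≤ K * U) (hy : a * ‖y‖ ≤ V) :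
    1 + a * ‖x‖ ≤ K * ((1 + U) * (1 + V)) := by
  have htri : a * ‖x‖ ≤ a * ‖x - y‖ + a * ‖y‖ := by
    rw [← mul_add]; exact mul_le_mul_of_nonneg_left (norm_le_norm_sub_add x y) ha
  nlinarith [mul_nonneg hU hV]

theorem rpow_neg_le_mul_rpow_neg {t K W N : ℝ} (ht : 0 < t) (hK : 0 < K) (hN : 0 ≤ N)
    (htW : t ≤ K * W) : W ^ (-N) ≤ K ^ N * t ^ (-N) := by
  have hW : 0 < W := pos_of_mul_pos_right (ht.trans_le htW) hK.le
  calc W ^ (-N) = K ^ N * (K * W) ^ (-N) := by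
        rw [Real.mul_rpow hK.le hW.le, ← mul_assoc, ← Real.rpow_add hK, add_neg_cancel,
          Real.rpow_zero, one_mul]
    _ ≤ K ^ N * t ^ (-N) := mul_le_mul_of_nonneg_left
        (Real.rpow_le_rpow_of_nonpos ht htW (neg_nonpos.mpr hN)) (by positivity)

theorem norm_mul_norm_le_shearlet {d j : ℕ} [NeZero d] {ℓ : Fin d → ℤ}
    (hℓ : ∀ t : Fin d, t ≠ 0 → |ℓ t| ≤ 2 ^ j) {F G : Type*} [SeminormedAddCommGroup F]
    [SeminormedAddCommGroup G] {f : EuclideanSpace ℝ (Fin d) → F}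
    {g : EuclideanSpace ℝ (Fin d) → G} {Cf Cg N r : ℝ} (hCf : 0 ≤ Cf) (hCg : 0 ≤ Cg) (hN : 0 ≤ N)
    (hf : ∀ u, ‖f u‖ ≤ Cf * (1 + ‖u‖) ^ (-(N + r))) (hg : ∀ v, ‖g v‖ ≤ Cg * (1 + ‖v‖) ^ (-N))
    (x y : EuclideanSpace ℝ (Fin d)) :
    ‖f (matVec (shearletB d ℓ * shearletA d j) (x - y))‖ * ‖g ((2 : ℝ) ^ (2 * j) • y)‖ ≤
      Cf * Cg * ((d : ℝ) ^ 2) ^ N * (1 + 2 ^ j * ‖x‖) ^ (-N) *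
        (1 + ‖matVec (shearletB d ℓ * shearletA d j) (x - y)‖) ^ (-r) := by
  set U := ‖matVec (shearletB d ℓ * shearletA d j) (x - y)‖
  set V := ‖(2 : ℝ) ^ (2 * j) • y‖
  have hd : (1 : ℝ) ≤ d ^ 2 :=
    one_le_pow₀ (by exact_mod_cast Nat.one_le_iff_ne_zero.mpr (NeZero.ne d))
  have hU : 0 < 1 + U := by positivity
  have hV : 0 < 1 + V := by positivity
  have hy : (2 : ℝ) ^ j * ‖y‖ ≤ V := by
    change _ ≤ ‖(2 : ℝ) ^ (2 * j) • y‖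
    rw [norm_smul, Real.norm_of_nonneg (by positivity)]
    gcongr
    · exact one_le_two
    · omega
  have hweight : 1 + 2 ^ j * ‖x‖ ≤ (d : ℝ) ^ 2 * ((1 + U) * (1 + V)) :=
    one_add_mul_norm_le_mul (by positivity) hd (norm_nonneg _) (norm_nonneg _)
      (two_pow_mul_norm_le_norm_matVec_shearlet hℓ (x - y)) hy
  calc ‖f _‖ * ‖g _‖ ≤ Cf * (1 + U) ^ (-(N + r)) * (Cg * (1 + V) ^ (-N)) :=
        mul_le_mul (hf _) (hg _) (norm_nonneg _) (by positivity)
    _ = Cf * Cg * ((1 + U) * (1 + V)) ^ (-N) * (1 + U) ^ (-r) := by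
        rw [Real.mul_rpow hU.le hV.le, neg_add, Real.rpow_add hU]
        ring
    _ ≤ Cf * Cg * (((d : ℝ) ^ 2) ^ N * (1 + 2 ^ j * ‖x‖) ^ (-N)) * (1 + U) ^ (-r) := by
        gcongr
        exact rpow_neg_le_mul_rpow_neg (by positivity) (by positivity) hN hweight
    _ = _ := by ring

theorem conv_shearlet_wavelet_decay_general (d : ℕ) [NeZero d]
    (ψ φ : SchwartzMap (EuclideanSpace ℝ (Fin d)) ℂ) :
    ∀ N : ℝ, (d : ℝ) < N → ∃ C : ℝ, 0 < C ∧
      ∀ (j : ℕ) (ℓ : Fin d → ℤ), (∀ t : Fin d, t ≠ 0 → |ℓ t| ≤ 2 ^ j) →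
        ∀ x : EuclideanSpace ℝ (Fin d),
          (∫ y : EuclideanSpace ℝ (Fin d),
              ‖ψ (matVec (shearletB d ℓ * shearletA d j) (x - y))‖ *
                ‖φ (((2 : ℝ) ^ (2 * j)) • y)‖) ≤
            C * (2 : ℝ) ^ (-(((d + 1) * j : ℕ) : ℤ)) * (1 + (2 : ℝ) ^ j * ‖x‖) ^ (-N) := by
  intro N hN
  have hN0 : 0 ≤ N := d.cast_nonneg.trans hN.le
  obtain ⟨Cψ, hCψ, hψ⟩ := ψ.exists_norm_le_mul_one_add_norm_rpow_neg (N + (d + 1))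
  obtain ⟨Cφ, hCφ, hφ⟩ := φ.exists_norm_le_mul_one_add_norm_rpow_neg N
  set w : EuclideanSpace ℝ (Fin d) → ℝ := fun z => (1 + ‖z‖) ^ (-((d : ℝ) + 1))
  have hw : Integrable w := integrable_one_add_norm (by simp)
  have hJ : 0 < ∫ z, w z :=
    (integral_pos_iff_support_of_nonneg (fun z => by positivity) hw).2 (by
      rw [Function.support_eq_univ fun z => (Real.rpow_pos_of_pos (by positivity) _).ne']
      exact Measure.measure_univ_pos.2 (NeZero.ne _))
  have hd : (0 : ℝ) < d := by exact_mod_cast Nat.pos_of_neZero d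
  refine ⟨Cψ * Cφ * ((d : ℝ) ^ 2) ^ N * ∫ z, w z, by positivity, fun j ℓ hℓ x => ?_⟩
  set M := shearletB d ℓ * shearletA d j
  have hdet : LinearMap.det (Matrix.toEuclideanLin M) = 2 ^ ((d + 1) * j) := by
    rw [LinearMap.det_toLpLin, det_shearletB_mul_shearletA]
  have hdet0 : LinearMap.det (Matrix.toEuclideanLin M) ≠ 0 := by rw [hdet]; positivity
  calc _ ≤ ∫ y, Cψ * Cφ * ((d : ℝ) ^ 2) ^ N * (1 + 2 ^ j * ‖x‖) ^ (-N) * w (matVec M (x - y)) :=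
        integral_mono_of_nonneg (ae_of_all _ fun y => by positivity)
          (((hw.comp_linearMap volume hdet0).comp_sub_left x).const_mul _)
          (ae_of_all _ (norm_mul_norm_le_shearlet hℓ hCψ.le hCφ.le hN0 hψ hφ x))
    _ = _ := by
        rw [integral_const_mul, integral_sub_left_eq_self (fun z => w (matVec M z))]
        simp only [matVec_eq_toEuclideanLin]
        rw [integral_comp_linearMap volume hdet0, hdet, zpow_neg, zpow_natCast,
          abs_of_pos (by positivity), smul_eq_mul]
        ring

/-- Almost orthogonality between a shear anisotropic dilation and a dyadic isotropic
dilation: `∫ |ψ(B^[ℓ]A^j(x-y))| |φ(2^{2j}y)| dy ≤ C_N 2^{-(d+1)j} (1+2^j|x|)^{-N}`. -/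
theorem conv_shearlet_wavelet_decay (d : ℕ) [NeZero d] (hd : 2 ≤ d)
    (ψ φ : SchwartzMap (EuclideanSpace ℝ (Fin d)) ℂ) :
    ∀ N : ℝ, (d : ℝ) < N → ∃ C : ℝ, 0 < C ∧
      ∀ (j : ℕ) (ℓ : Fin d → ℤ), (∀ t : Fin d, t ≠ 0 → |ℓ t| ≤ 2 ^ j) →
        ∀ x : EuclideanSpace ℝ (Fin d),
          (∫ y : EuclideanSpace ℝ (Fin d),
              ‖ψ (matVec (shearletB d ℓ * shearletA d j) (x - y))‖ *
                ‖φ (((2 : ℝ) ^ (2 * j)) • y)‖) ≤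
            C * (2 : ℝ) ^ (-(((d + 1) * j : ℕ) : ℤ)) * (1 + (2 : ℝ) ^ j * ‖x‖) ^ (-N) :=
  conv_shearlet_wavelet_decay_general d ψ φ
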